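/- arXiv:2605.00566 — 9 statements merged into one kernel-verified Lean document; each statement's English description precedes it below -/
import Mathlib

section
/- Let Σ be a finite alphabet and let S₁, S₂ be set-strings of equal length m over Σ. Then S₁ and S₂ set-parameterized match if and only if for every position i, their multiset offset representations agree, i.e. Ŝ₁[i] = Ŝ₂[i] as multisets of finite sets of natural numbers. -/
/-- The occurrence set of character `σ` in the set-string `S`. -/
def Occ {Γ : Type*} [DecidableEq Γ] {m : ℕ} (S : Fin m → Finset Γ) (σ : Γ) :
    Finset (Fin m) :=
  Finset.univ.filter fun i => σ ∈ S i

/-- The offset set of character `σ` in the set-string `S`: the set of distances from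
its first occurrence to each of its occurrences; `∅` if `σ` never occurs. -/
def OffSet {Γ : Type*} [DecidableEq Γ] {m : ℕ} (S : Fin m → Finset Γ) (σ : Γ) :
    Finset ℕ :=
  if h : (Occ S σ).Nonempty then
    (Occ S σ).image fun i : Fin m => (i : ℕ) - (((Occ S σ).min' h : Fin m) : ℕ)
  else ∅

/-- The multiset offset representation of `S` at position `i`: the multiset of the
offset sets of the characters in `S i` (one element per character). -/
def offsetRep {Γ : Type*} [DecidableEq Γ] {m : ℕ} (S : Fin m → Finset Γ) (i : Fin m) :
    Multiset (Finset ℕ) :=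
  (S i).val.map fun σ => OffSet S σ

open Finset

namespace SetParamAux

variable {Γ : Type*} [DecidableEq Γ] {m : ℕ}

/-- The offset set of an abstract occurrence set. -/
def offOf (B : Finset (Fin m)) : Finset ℕ :=
  if h : B.Nonempty then B.image fun i : Fin m => (i : ℕ) - ((B.min' h : Fin m) : ℕ) else ∅

lemma mem_occ (S : Fin m → Finset Γ) (σ : Γ) (i : Fin m) :
    i ∈ Occ S σ ↔ σ ∈ S i := by simp [Occ]

lemma offSet_eq (S : Fin m → Finset Γ) (σ : Γ) : OffSet S σ = offOf (Occ S σ) := rfl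

lemma mem_iff_of (B : Finset (Fin m)) (h : B.Nonempty) (i : Fin m) :
    i ∈ B ↔ ∃ d ∈ offOf B, (i : ℕ) = (B.min' h : ℕ) + d := by
  constructor
  · intro hi
    have hle : ((B.min' h : Fin m) : ℕ) ≤ (i : ℕ) := B.min'_le i hi
    refine ⟨(i : ℕ) - (B.min' h : ℕ), ?_, by omega⟩
    simp only [offOf, dif_pos h, mem_image]
    exact ⟨i, hi, rfl⟩
  · rintro ⟨d, hd, hi⟩
    simp only [offOf, dif_pos h, mem_image] at hd
    obtain ⟨j, hj, rfl⟩ := hd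
    have hle : ((B.min' h : Fin m) : ℕ) ≤ (j : ℕ) := B.min'_le j hj
    have : (i : ℕ) = (j : ℕ) := by omega
    have : i = j := Fin.ext this
    rwa [this]

lemma eq_of_min_off {B₁ B₂ : Finset (Fin m)} (h₁ : B₁.Nonempty) (h₂ : B₂.Nonempty)
    (hmin : ((B₁.min' h₁ : Fin m) : ℕ) = ((B₂.min' h₂ : Fin m) : ℕ))
    (hoff : offOf B₁ = offOf B₂) : B₁ = B₂ := by
  ext i
  rw [mem_iff_of B₁ h₁ i, mem_iff_of B₂ h₂ i, hmin, hoff]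

open scoped Classical in
lemma count_offsetRep [Fintype Γ] (S : Fin m → Finset Γ) (i : Fin m) (D : Finset ℕ) :
    Multiset.count D (offsetRep S i)
      = (univ.filter fun σ => i ∈ Occ S σ ∧ OffSet S σ = D).card := by
  rw [offsetRep, Multiset.count_map]
  rw [show ((S i).val.filter fun σ => D = OffSet S σ).card
      = ((S i).filter fun σ => D = OffSet S σ).card from rfl]
  congr 1
  ext σ
  simp only [mem_filter, mem_univ, true_and, mem_occ]
  constructor
  · rintro ⟨h1, h2⟩; exact ⟨h1, h2.symm⟩
  · rintro ⟨h1, h2⟩; exact ⟨h1, h2.symm⟩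

open scoped Classical in
lemma class_card_eq_nonempty [Fintype Γ] (S₁ S₂ : Fin m → Finset Γ)
    (h : ∀ i, offsetRep S₁ i = offsetRep S₂ i) :
    ∀ (n : ℕ) (A : Finset (Fin m)) (hA : A.Nonempty), ((A.min' hA : Fin m) : ℕ) = n →
      (univ.filter fun σ => Occ S₁ σ = A).card = (univ.filter fun σ => Occ S₂ σ = A).card := by
  intro n
  induction n using Nat.strong_induction_on with
  | _ n IH =>
    intro A hA hn
    set i₁ : Fin m := A.min' hA with hi₁
    set D : Finset ℕ := offOf A with hD
    -- the full filter
    have hFcard : (univ.filter fun σ => i₁ ∈ Occ S₁ σ ∧ OffSet S₁ σ = D).card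
        = (univ.filter fun σ => i₁ ∈ Occ S₂ σ ∧ OffSet S₂ σ = D).card := by
      rw [← count_offsetRep S₁ i₁ D, ← count_offsetRep S₂ i₁ D, h i₁]
    -- split F into class A and the rest
    have hsplit : ∀ S : Fin m → Finset Γ,
        (univ.filter fun σ => i₁ ∈ Occ S σ ∧ OffSet S σ = D).card
          = (univ.filter fun σ => Occ S σ = A).card
            + (univ.filter fun σ => i₁ ∈ Occ S σ ∧ OffSet S σ = D ∧ Occ S σ ≠ A).card := by
      intro S
      rw [← Finset.card_filter_add_card_filter_not
        (s := univ.filter fun σ => i₁ ∈ Occ S σ ∧ OffSet S σ = D) (p := fun σ => Occ S σ = A)]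
      congr 1
      · congr 1
        ext σ
        simp only [mem_filter, mem_univ, true_and]
        constructor
        · rintro ⟨_, hOA⟩; exact hOA
        · rintro hOA
          refine ⟨⟨?_, ?_⟩, hOA⟩
          · rw [hOA]; exact A.min'_mem hA
          · rw [offSet_eq, hOA, hD]
      · congr 1
        ext σ
        simp only [mem_filter, mem_univ, true_and]
        tauto
    -- the rest is a biUnion over smaller classes
    have hrest : (univ.filter fun σ => i₁ ∈ Occ S₁ σ ∧ OffSet S₁ σ = D ∧ Occ S₁ σ ≠ A).card
        = (univ.filter fun σ => i₁ ∈ Occ S₂ σ ∧ OffSet S₂ σ = D ∧ Occ S₂ σ ≠ A).card := by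
      set 𝒜 : Finset (Finset (Fin m)) :=
        univ.filter (fun A' => i₁ ∈ A' ∧ offOf A' = D ∧ A' ≠ A) with h𝒜
      have hbi : ∀ S : Fin m → Finset Γ,
          (univ.filter fun σ => i₁ ∈ Occ S σ ∧ OffSet S σ = D ∧ Occ S σ ≠ A)
            = 𝒜.biUnion (fun A' => univ.filter fun σ => Occ S σ = A') := by
        intro S
        ext σ
        simp only [mem_biUnion, mem_filter, mem_univ, true_and, h𝒜]
        constructor
        · rintro ⟨h1, h2, h3⟩
          exact ⟨Occ S σ, ⟨h1, by rw [← offSet_eq]; exact h2, h3⟩, rfl⟩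
        · rintro ⟨A', ⟨h1, h2, h3⟩, rfl⟩
          exact ⟨h1, by rw [offSet_eq]; exact h2, h3⟩
      have hdisj : ∀ S : Fin m → Finset Γ, ∀ A' ∈ 𝒜, ∀ A'' ∈ 𝒜, A' ≠ A'' →
          Disjoint (univ.filter fun σ => Occ S σ = A') (univ.filter fun σ => Occ S σ = A'') := by
        intro S A' _ A'' _ hne
        rw [Finset.disjoint_left]
        intro σ hσ hσ'
        simp only [mem_filter, mem_univ, true_and] at hσ hσ'
        exact hne (hσ ▸ hσ' ▸ rfl)
      rw [hbi S₁, hbi S₂, Finset.card_biUnion (hdisj S₁), Finset.card_biUnion (hdisj S₂)]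
      apply Finset.sum_congr rfl
      intro A' hA'
      simp only [h𝒜, mem_filter, mem_univ, true_and] at hA'
      obtain ⟨hmem, hoffA', hneA'⟩ := hA'
      have hA'ne : A'.Nonempty := ⟨i₁, hmem⟩
      have hle : ((A'.min' hA'ne : Fin m) : ℕ) ≤ (i₁ : ℕ) := A'.min'_le i₁ hmem
      have hlt : ((A'.min' hA'ne : Fin m) : ℕ) < n := by
        rcases lt_or_eq_of_le hle with h' | h'
        · omega
        · exfalso
          exact hneA' (eq_of_min_off hA'ne hA (by rw [h', hn]) (by rw [hoffA', hD]))
      exact IH _ hlt A' hA'ne rfl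
    have h1 := hsplit S₁
    have h2 := hsplit S₂
    omega

open scoped Classical in
lemma class_card_eq [Fintype Γ] (S₁ S₂ : Fin m → Finset Γ)
    (h : ∀ i, offsetRep S₁ i = offsetRep S₂ i) (A : Finset (Fin m)) :
    (univ.filter fun σ => Occ S₁ σ = A).card = (univ.filter fun σ => Occ S₂ σ = A).card := by
  rcases A.eq_empty_or_nonempty with rfl | hA
  · -- complement argument
    have hcompl : ∀ S : Fin m → Finset Γ,
        (univ.filter fun σ => ¬ Occ S σ = (∅ : Finset (Fin m)))
          = (univ.filter (fun A' : Finset (Fin m) => A'.Nonempty)).biUnion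
              (fun A' => univ.filter fun σ => Occ S σ = A') := by
      intro S
      ext σ
      simp only [mem_biUnion, mem_filter, mem_univ, true_and]
      constructor
      · intro hne
        exact ⟨Occ S σ, Finset.nonempty_iff_ne_empty.2 hne, rfl⟩
      · rintro ⟨A', hA', rfl⟩
        exact Finset.nonempty_iff_ne_empty.1 hA'
    have hdisj : ∀ S : Fin m → Finset Γ,
        ∀ A' ∈ univ.filter (fun A' : Finset (Fin m) => A'.Nonempty),
        ∀ A'' ∈ univ.filter (fun A' : Finset (Fin m) => A'.Nonempty), A' ≠ A'' →
          Disjoint (univ.filter fun σ => Occ S σ = A') (univ.filter fun σ => Occ S σ = A'') := by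
      intro S A' _ A'' _ hne
      rw [Finset.disjoint_left]
      intro σ hσ hσ'
      simp only [mem_filter, mem_univ, true_and] at hσ hσ'
      exact hne (hσ ▸ hσ' ▸ rfl)
    have hne : (univ.filter fun σ => ¬ Occ S₁ σ = (∅ : Finset (Fin m))).card
        = (univ.filter fun σ => ¬ Occ S₂ σ = (∅ : Finset (Fin m))).card := by
      rw [hcompl S₁, hcompl S₂, Finset.card_biUnion (hdisj S₁), Finset.card_biUnion (hdisj S₂)]
      apply Finset.sum_congr rfl
      intro A' hA'
      simp only [mem_filter, mem_univ, true_and] at hA'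
      exact class_card_eq_nonempty S₁ S₂ h _ A' hA' rfl
    have h1 := Finset.card_filter_add_card_filter_not
      (s := (univ : Finset Γ)) (p := fun σ => Occ S₁ σ = (∅ : Finset (Fin m)))
    have h2 := Finset.card_filter_add_card_filter_not
      (s := (univ : Finset Γ)) (p := fun σ => Occ S₂ σ = (∅ : Finset (Fin m)))
    omega
  · exact class_card_eq_nonempty S₁ S₂ h _ A hA rfl

end SetParamAux

open SetParamAux in
/-- Two set-strings set-parameterized match iff their multiset offset representations
agree at every position. -/
theorem setParamMatch_iff_offsetRep_eq {Γ : Type*} [Fintype Γ] [DecidableEq Γ]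
    {m : ℕ} (S₁ S₂ : Fin m → Finset Γ) :
    (∃ π : Γ ≃ Γ, ∀ i, (S₁ i).image π = S₂ i) ↔
      ∀ i, offsetRep S₁ i = offsetRep S₂ i := by
  constructor
  · rintro ⟨π, hπ⟩ i
    have hOcc : ∀ σ, Occ S₂ (π σ) = Occ S₁ σ := by
      intro σ
      ext j
      rw [mem_occ, mem_occ, ← hπ j, Finset.mem_image]
      constructor
      · rintro ⟨τ, hτ, hττ⟩
        rwa [← π.injective hττ]
      · intro hσ; exact ⟨σ, hσ, rfl⟩
    have hOff : ∀ σ, OffSet S₂ (π σ) = OffSet S₁ σ := by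
      intro σ; rw [offSet_eq, offSet_eq, hOcc]
    rw [offsetRep, offsetRep, ← hπ i,
      Finset.image_val_of_injOn (π.injective.injOn), Multiset.map_map]
    exact Multiset.map_congr rfl (fun σ _ => (hOff σ).symm)
  · intro h
    classical
    have key : ∀ A : Finset (Fin m),
        Fintype.card {σ // Occ S₁ σ = A} = Fintype.card {σ // Occ S₂ σ = A} := by
      intro A
      rw [Fintype.card_subtype, Fintype.card_subtype]
      exact class_card_eq S₁ S₂ h A
    let e : ∀ A : Finset (Fin m), {σ // Occ S₁ σ = A} ≃ {σ // Occ S₂ σ = A} :=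
      fun A => Fintype.equivOfCardEq (key A)
    let π : Γ ≃ Γ := (Equiv.sigmaFiberEquiv (Occ S₁)).symm.trans
      ((Equiv.sigmaCongrRight e).trans (Equiv.sigmaFiberEquiv (Occ S₂)))
    have hπOcc : ∀ σ, Occ S₂ (π σ) = Occ S₁ σ := by
      intro σ
      have : π σ = (e (Occ S₁ σ) ⟨σ, rfl⟩).1 := rfl
      rw [this]
      exact (e (Occ S₁ σ) ⟨σ, rfl⟩).2
    refine ⟨π, fun i => ?_⟩
    ext τ
    simp only [Finset.mem_image]
    constructor
    · rintro ⟨σ, hσ, rfl⟩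
      rw [← mem_occ, hπOcc, mem_occ]
      exact hσ
    · intro hτ
      refine ⟨π.symm τ, ?_, π.apply_symm_apply τ⟩
      rw [← mem_occ (S₁), ← hπOcc, π.apply_symm_apply, mem_occ]
      exact hτ
end

section
/- Let S be a set-string of length m over a finite alphabet Σ. For every position i and every finite set O of natural numbers, the multiplicity of O in the multiset offset representation Ŝ[i] equals the sum, over all δ ∈ O with δ ≤ i, of N_S(i − δ, O); in particular Count_S(i, O) = N_S(i, O) + Σ_{δ ∈ O, 0 < δ ≤ i} N_S(i − δ, O). -/
/-- `NStart S s O` is the number of characters whose first occurrence in `S` is at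
position `s` and whose offset set is `O`. -/
def NStart {Γ : Type*} [Fintype Γ] [DecidableEq Γ] {m : ℕ} (S : Fin m → Finset Γ)
    (s : ℕ) (O : Finset ℕ) : ℕ :=
  if h : s < m then
    (Finset.univ.filter fun σ =>
      σ ∈ S ⟨s, h⟩ ∧ (∀ j, σ ∈ S j → s ≤ (j : ℕ)) ∧ OffSet S σ = O).card
  else 0

/-!
Group the characters of `S i` with offset set `O` by the distance `δ` from their first
occurrence to `i`. Read from the first occurrence `s`, the offset set determines all
occurrences: `σ ∈ S k ↔ s ≤ k ∧ k - s ∈ OffSet S σ`. Hence a character with offset set `O`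
and first occurrence `i - δ` lies in `S i` exactly when `δ ∈ O`, and the count at `i` is the
sum of `NStart S (i - δ) O` over `δ ∈ O`, `δ ≤ i`. The term `δ = 0` is `NStart S i O`, which
vanishes anyway when `0 ∉ O`, since every occurring character has `0` in its offset set.
-/

open Finset

section SetString

variable {Γ : Type*} [DecidableEq Γ] {m : ℕ} (S : Fin m → Finset Γ) {σ : Γ}

@[simp]
lemma mem_Occ {j : Fin m} : j ∈ Occ S σ ↔ σ ∈ S j := by
  simp [Occ]

lemma exists_le_isLeast_Occ {i : Fin m} (hi : σ ∈ S i) :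
    ∃ j ≤ i, IsLeast (Occ S σ : Set (Fin m)) j :=
  have hne : (Occ S σ).Nonempty := ⟨i, (mem_Occ S).2 hi⟩
  ⟨_, (Occ S σ).min'_le i ((mem_Occ S).2 hi), (Occ S σ).isLeast_min' hne⟩

lemma OffSet_eq_image_of_isLeast {j : Fin m} (hj : IsLeast (Occ S σ : Set (Fin m)) j) :
    OffSet S σ = (Occ S σ).image fun k : Fin m => (k : ℕ) - j := by
  have hne : (Occ S σ).Nonempty := ⟨j, hj.1⟩
  rw [OffSet, dif_pos hne, ((Occ S σ).isLeast_min' hne).unique hj]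

lemma mem_iff_sub_mem_OffSet_of_isLeast {j : Fin m} (hj : IsLeast (Occ S σ : Set (Fin m)) j)
    (k : Fin m) :
    σ ∈ S k ↔ j ≤ k ∧ (k : ℕ) - j ∈ OffSet S σ := by
  rw [OffSet_eq_image_of_isLeast S hj, mem_image]
  constructor
  · intro hk
    exact ⟨hj.2 ((mem_Occ S).2 hk), k, (mem_Occ S).2 hk, rfl⟩
  · rintro ⟨hjk, l, hl, hlk⟩
    have hjl : j ≤ l := hj.2 hl
    rw [Fin.le_iff_val_le_val] at hjk hjl
    rwa [← mem_Occ S, ← Fin.ext (by omega : (l : ℕ) = k)]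

lemma zero_mem_OffSet_of_mem {i : Fin m} (hi : σ ∈ S i) : 0 ∈ OffSet S σ := by
  obtain ⟨j, -, hj⟩ := exists_le_isLeast_Occ S hi
  simpa using ((mem_iff_sub_mem_OffSet_of_isLeast S hj j).1 ((mem_Occ S).1 hj.1)).2

lemma count_offsetRep (i : Fin m) (O : Finset ℕ) :
    (offsetRep S i).count O = #{σ ∈ S i | OffSet S σ = O} := by
  rw [offsetRep, Multiset.count_map, card_def, filter_val]
  exact congrArg _ (Multiset.filter_congr fun _ _ => eq_comm)

end SetString

lemma Finset.sum_filter_le_eq_add_sum_filter_pos {M : Type*} [AddCommMonoid M] (O : Finset ℕ)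
    (n : ℕ) (f : ℕ → M) (hf : 0 ∉ O → f 0 = 0) :
    ∑ δ ∈ O with δ ≤ n, f δ = f 0 + ∑ δ ∈ O with 0 < δ ∧ δ ≤ n, f δ := by
  by_cases h0 : 0 ∈ O
  · have hsplit : {δ ∈ O | δ ≤ n} = insert 0 {δ ∈ O | 0 < δ ∧ δ ≤ n} := by
      ext δ
      rcases Nat.eq_zero_or_pos δ with rfl | hδ
      · simp [h0]
      · simp [hδ, hδ.ne']
    rw [hsplit, sum_insert (by simp)]
  · rw [hf h0, zero_add]
    refine sum_congr (filter_congr fun δ hδ => ?_) fun _ _ => rfl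
    have : δ ≠ 0 := by rintro rfl; exact h0 hδ
    omega

section Counting

variable {Γ : Type*} [Fintype Γ] [DecidableEq Γ] {m : ℕ} (S : Fin m → Finset Γ)

open Classical in
lemma NStart_eq_card (j : Fin m) (O : Finset ℕ) :
    NStart S j O = #{σ | IsLeast (Occ S σ : Set (Fin m)) j ∧ OffSet S σ = O} := by
  rw [NStart, dif_pos j.isLt]
  congr 1
  ext σ
  simp only [mem_filter, mem_univ, true_and, IsLeast, mem_lowerBounds, mem_coe, mem_Occ,
    Fin.le_iff_val_le_val, Fin.eta, and_assoc]

lemma card_filter_OffSet_eq_sum_NStart (i : Fin m) (O : Finset ℕ) :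
    #{σ ∈ S i | OffSet S σ = O} = ∑ δ ∈ O with δ ≤ (i : ℕ), NStart S ((i : ℕ) - δ) O := by
  classical
  let start (δ : ℕ) : Fin m := ⟨i - δ, (i.val.sub_le δ).trans_lt i.isLt⟩
  let fibre (δ : ℕ) : Finset Γ :=
    {σ | IsLeast (Occ S σ : Set (Fin m)) (start δ) ∧ OffSet S σ = O}
  have hfibres : {σ ∈ S i | OffSet S σ = O} = {δ ∈ O | δ ≤ (i : ℕ)}.biUnion fibre := by
    ext σ
    simp only [fibre, mem_filter, mem_biUnion, mem_univ, true_and]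
    constructor
    · rintro ⟨hi, rfl⟩
      obtain ⟨j, hji, hj⟩ := exists_le_isLeast_Occ S hi
      have hδ := ((mem_iff_sub_mem_OffSet_of_isLeast S hj i).1 hi).2
      refine ⟨i - j, ⟨hδ, Nat.sub_le _ _⟩, ?_, rfl⟩
      rwa [show start (i - j) = j from Fin.ext (by simp [start]; omega)]
    · rintro ⟨δ, ⟨hδ, hδi⟩, hstart, rfl⟩
      refine ⟨(mem_iff_sub_mem_OffSet_of_isLeast S hstart i).2 ⟨?_, ?_⟩, rfl⟩
      · simp [start, Fin.le_iff_val_le_val]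
      · simpa [start, Nat.sub_sub_self hδi] using hδ
  have hdisj : (({δ ∈ O | δ ≤ (i : ℕ)} : Finset ℕ) : Set ℕ).PairwiseDisjoint fibre := by
    intro δ hδ δ' hδ' hne
    refine disjoint_filter.2 fun σ _ h h' => hne ?_
    have := congrArg Fin.val (h.1.unique h'.1)
    simp only [coe_filter, Set.mem_ofPred_eq] at hδ hδ'
    simp only [start] at this
    omega
  rw [hfibres, card_biUnion hdisj]
  exact sum_congr rfl fun δ _ => (NStart_eq_card S (start δ) O).symm

lemma NStart_eq_zero_of_zero_notMem (s : ℕ) {O : Finset ℕ} (hO : 0 ∉ O) : NStart S s O = 0 := by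
  unfold NStart
  split_ifs
  · refine card_eq_zero.2 (filter_eq_empty_iff.2 ?_)
    rintro σ - ⟨hσ, -, rfl⟩
    exact hO (zero_mem_OffSet_of_mem S hσ)
  · rfl

end Counting

/-- The multiplicity of `O` in the multiset offset representation at position `i`
equals the sum, over all `δ ∈ O` with `δ ≤ i`, of `NStart S (i - δ) O`; in particular
it equals `NStart S i O` plus the sum over the strictly positive such offsets. -/
theorem count_offsetRep_eq_sum_NStart {Γ : Type*} [Fintype Γ] [DecidableEq Γ]
    {m : ℕ} (S : Fin m → Finset Γ) (i : Fin m) (O : Finset ℕ) :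
    (offsetRep S i).count O =
        ∑ δ ∈ O.filter (fun δ => δ ≤ (i : ℕ)), NStart S ((i : ℕ) - δ) O ∧
      (offsetRep S i).count O =
        NStart S (i : ℕ) O +
          ∑ δ ∈ O.filter (fun δ => 0 < δ ∧ δ ≤ (i : ℕ)), NStart S ((i : ℕ) - δ) O := by
  have hcount := (count_offsetRep S i O).trans (card_filter_OffSet_eq_sum_NStart S i O)
  refine ⟨hcount, hcount.trans ?_⟩
  simpa using Finset.sum_filter_le_eq_add_sum_filter_pos O i (fun δ => NStart S (i - δ) O)
    (NStart_eq_zero_of_zero_notMem S _)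
end

section
/- Let S₁, S₂ be set-strings of equal length m over a finite alphabet Σ. If N_{S₁}(s, O) = N_{S₂}(s, O) for every position s and every finite set O of natural numbers, then S₁ and S₂ set-parameterized match: there exists a bijection π : Σ → Σ with π(S₁ i) = S₂ i (image under π) for every i. -/
/-- type function -/
def TFun {Γ : Type*} [DecidableEq Γ] {m : ℕ} (S : Fin m → Finset Γ) (σ : Γ) :
    Option (ℕ × Finset ℕ) :=
  if h : (Occ S σ).Nonempty then
    some ((((Occ S σ).min' h : Fin m) : ℕ), OffSet S σ) else none

lemma mem_occ {Γ : Type*} [DecidableEq Γ] {m : ℕ} {S : Fin m → Finset Γ} {σ : Γ}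
    {i : Fin m} : i ∈ Occ S σ ↔ σ ∈ S i := by simp [Occ]

lemma mem_iff_tfun {Γ : Type*} [DecidableEq Γ] {m : ℕ} (S : Fin m → Finset Γ)
    (σ : Γ) (i : Fin m) :
    σ ∈ S i ↔ ∃ s O, TFun S σ = some (s, O) ∧ s ≤ (i : ℕ) ∧ (i : ℕ) - s ∈ O := by
  constructor
  · intro hi
    have hne : (Occ S σ).Nonempty := ⟨i, mem_occ.2 hi⟩
    refine ⟨(((Occ S σ).min' hne : Fin m) : ℕ), OffSet S σ, by simp [TFun, hne], ?_, ?_⟩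
    · exact Finset.min'_le _ _ (mem_occ.2 hi)
    · simp only [OffSet, hne, dif_pos, Finset.mem_image]
      exact ⟨i, mem_occ.2 hi, rfl⟩
  · rintro ⟨s, O, ht, hs, hO⟩
    by_cases hne : (Occ S σ).Nonempty
    · simp only [TFun, hne, dif_pos, Option.some.injEq, Prod.mk.injEq] at ht
      obtain ⟨hs', hO'⟩ := ht
      subst hs' hO'
      simp only [OffSet, hne, dif_pos, Finset.mem_image] at hO
      obtain ⟨j, hj, hj'⟩ := hO
      have hsj : ((Occ S σ).min' hne : ℕ) ≤ (j : ℕ) := Finset.min'_le _ _ hj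
      have : (j : ℕ) = (i : ℕ) := by omega
      have : j = i := Fin.ext this
      subst this
      exact mem_occ.1 hj
    · simp [TFun, hne] at ht

lemma fiber_some_card {Γ : Type*} [Fintype Γ] [DecidableEq Γ] {m : ℕ}
    (S : Fin m → Finset Γ) (s : ℕ) (O : Finset ℕ) :
    (Finset.univ.filter fun σ => TFun S σ = some (s, O)).card = NStart S s O := by
  by_cases hm : s < m
  · simp only [NStart, hm, dif_pos]
    congr 1
    ext σ
    simp only [Finset.mem_filter, Finset.mem_univ, true_and]
    constructor
    · intro ht
      by_cases hne : (Occ S σ).Nonempty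
      · simp only [TFun, hne, dif_pos, Option.some.injEq, Prod.mk.injEq] at ht
        obtain ⟨hs', hO'⟩ := ht
        have hmin : (Occ S σ).min' hne = ⟨s, hm⟩ := Fin.ext hs'
        refine ⟨?_, ?_, hO'⟩
        · have := (Occ S σ).min'_mem hne
          rw [hmin] at this
          exact mem_occ.1 this
        · intro j hj
          have := Finset.min'_le _ _ (mem_occ.2 hj)
          rw [hmin] at this
          exact this
      · simp [TFun, hne] at ht
    · rintro ⟨h1, h2, h3⟩
      have hne : (Occ S σ).Nonempty := ⟨⟨s, hm⟩, mem_occ.2 h1⟩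
      have hmin : (Occ S σ).min' hne = ⟨s, hm⟩ := by
        apply le_antisymm
        · exact Finset.min'_le _ _ (mem_occ.2 h1)
        · exact h2 _ (mem_occ.1 ((Occ S σ).min'_mem hne))
      simp [TFun, hne, hmin, h3]
  · unfold NStart
    rw [dif_neg hm, Finset.card_eq_zero, Finset.filter_eq_empty_iff]
    intro σ _ ht
    by_cases hne : (Occ S σ).Nonempty
    · simp only [TFun, hne, dif_pos, Option.some.injEq, Prod.mk.injEq] at ht
      exact hm (ht.1 ▸ (((Occ S σ).min' hne).isLt))
    · simp [TFun, hne] at ht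

lemma fiber_card_eq {Γ : Type*} [Fintype Γ] [DecidableEq Γ] {m : ℕ}
    (S₁ S₂ : Fin m → Finset Γ)
    (h : ∀ (s : ℕ) (O : Finset ℕ), NStart S₁ s O = NStart S₂ s O)
    (t : Option (ℕ × Finset ℕ)) :
    (Finset.univ.filter fun σ => TFun S₁ σ = t).card
      = (Finset.univ.filter fun σ => TFun S₂ σ = t).card := by
  have hsome : ∀ s O, (Finset.univ.filter fun σ => TFun S₁ σ = some (s, O)).card
      = (Finset.univ.filter fun σ => TFun S₂ σ = some (s, O)).card := by
    intro s O
    rw [fiber_some_card, fiber_some_card, h]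
  match t with
  | some (s, O) => exact hsome s O
  | none =>
    set B : Finset (Option (ℕ × Finset ℕ)) :=
      insert none ((Finset.univ.image (TFun S₁)) ∪ (Finset.univ.image (TFun S₂))) with hB
    have hmem1 : ∀ σ : Γ, σ ∈ (Finset.univ : Finset Γ) → TFun S₁ σ ∈ B := fun σ _ => by
      simp [hB]
    have hmem2 : ∀ σ : Γ, σ ∈ (Finset.univ : Finset Γ) → TFun S₂ σ ∈ B := fun σ _ => by
      simp [hB]
    have c1 := Finset.card_eq_sum_card_fiberwise hmem1
    have c2 := Finset.card_eq_sum_card_fiberwise hmem2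
    have hnone : none ∈ B := Finset.mem_insert_self _ _
    rw [← Finset.add_sum_erase B _ hnone] at c1 c2
    have hrest : ∑ t ∈ B.erase none, (Finset.univ.filter fun σ => TFun S₁ σ = t).card
        = ∑ t ∈ B.erase none, (Finset.univ.filter fun σ => TFun S₂ σ = t).card := by
      apply Finset.sum_congr rfl
      intro t ht
      have : t ≠ none := (Finset.mem_erase.1 ht).1
      match t, this with
      | some (s, O), _ => exact hsome s O
    omega

/-- If for every start position `s` and every offset set `O` the two set-strings have
the same number of characters of type `(s, O)`, then they set-parameterized match. -/
theorem setParamMatch_of_NStart_eq {Γ : Type*} [Fintype Γ] [DecidableEq Γ]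
    {m : ℕ} (S₁ S₂ : Fin m → Finset Γ)
    (h : ∀ (s : ℕ) (O : Finset ℕ), NStart S₁ s O = NStart S₂ s O) :
    ∃ π : Γ ≃ Γ, ∀ i, (S₁ i).image π = S₂ i := by
  have e : ∀ t : Option (ℕ × Finset ℕ),
      {σ : Γ // TFun S₁ σ = t} ≃ {σ : Γ // TFun S₂ σ = t} := fun t => by
    apply Fintype.equivOfCardEq
    rw [Fintype.card_subtype, Fintype.card_subtype]
    exact fiber_card_eq S₁ S₂ h t
  refine ⟨Equiv.ofFiberEquiv e, fun i => ?_⟩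
  have hπ : ∀ σ, TFun S₂ ((Equiv.ofFiberEquiv e) σ) = TFun S₁ σ :=
    fun σ => Equiv.ofFiberEquiv_map e σ
  set π := Equiv.ofFiberEquiv e with hπdef
  ext σ'
  simp only [Finset.mem_image]
  constructor
  · rintro ⟨a, ha, rfl⟩
    obtain ⟨s, O, ht, hs, hO⟩ := (mem_iff_tfun S₁ a i).1 ha
    exact (mem_iff_tfun S₂ (π a) i).2 ⟨s, O, (hπ a).trans ht, hs, hO⟩
  · intro hσ'
    refine ⟨π.symm σ', ?_, π.apply_symm_apply σ'⟩
    obtain ⟨s, O, ht, hs, hO⟩ := (mem_iff_tfun S₂ σ' i).1 hσ'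
    refine (mem_iff_tfun S₁ (π.symm σ') i).2 ⟨s, O, ?_, hs, hO⟩
    rw [← hπ (π.symm σ'), π.apply_symm_apply, ht]
end

section
/- Let Σ be a finite alphabet and P, T : Fin m → Σ two strings of equal length m. Then P and T parameterized match (there exists a bijection π : Σ → Σ with T i = π (P i) for all i) if and only if prev(P) = prev(T) as sequences of natural numbers. -/
/-- Baker's prev transformation: `prevVal S i = 0` if `S i` does not occur before
position `i`, and otherwise `i - j` where `j` is the largest index `j < i` with
`S j = S i`. -/
def prevVal {Γ : Type*} [DecidableEq Γ] {m : ℕ} (S : Fin m → Γ) (i : Fin m) : ℕ :=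
  if h : (Finset.univ.filter fun j => j < i ∧ S j = S i).Nonempty then
    (i : ℕ) - (((Finset.univ.filter fun j => j < i ∧ S j = S i).max' h : Fin m) : ℕ)
  else 0

lemma prev_aux {Γ : Type*} [DecidableEq Γ] {m : ℕ} (P T : Fin m → Γ)
    (h : ∀ i, prevVal P i = prevVal T i) :
    ∀ i j : Fin m, j < i → P j = P i → T j = T i := by
  have H : ∀ n : ℕ, ∀ i j : Fin m, (i : ℕ) ≤ n → j < i → P j = P i → T j = T i := by
    intro n
    induction n with
    | zero =>
      intro i j hi hj _
      exact absurd (Fin.lt_iff_val_lt_val.mp hj) (by omega)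
    | succ n ih =>
      intro i j hi hj hPT
      have hsP : (Finset.univ.filter fun k => k < i ∧ P k = P i).Nonempty :=
        ⟨j, by simp [hj, hPT]⟩
      set k := (Finset.univ.filter fun k => k < i ∧ P k = P i).max' hsP with hk
      have hkmem := (Finset.univ.filter fun k => k < i ∧ P k = P i).max'_mem hsP
      rw [← hk] at hkmem
      simp only [Finset.mem_filter, Finset.mem_univ, true_and] at hkmem
      have hjk : j ≤ k := Finset.le_max' _ j (by simp [hj, hPT])
      have hPi : prevVal P i = (i : ℕ) - (k : ℕ) := by
        rw [prevVal, dif_pos hsP]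
      have hpos : 0 < prevVal P i := by
        rw [hPi]
        have := Fin.lt_iff_val_lt_val.mp hkmem.1
        omega
      have hTpos : 0 < prevVal T i := by rw [← h i]; exact hpos
      have hsT : (Finset.univ.filter fun k => k < i ∧ T k = T i).Nonempty := by
        by_contra hc
        rw [prevVal, dif_neg hc] at hTpos
        exact absurd hTpos (by omega)
      set k' := (Finset.univ.filter fun k => k < i ∧ T k = T i).max' hsT with hk'
      have hk'mem := (Finset.univ.filter fun k => k < i ∧ T k = T i).max'_mem hsT
      rw [← hk'] at hk'mem
      simp only [Finset.mem_filter, Finset.mem_univ, true_and] at hk'mem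
      have hTi : prevVal T i = (i : ℕ) - (k' : ℕ) := by
        rw [prevVal, dif_pos hsT]
      have hkk' : k = k' := by
        have h1 := h i
        rw [hPi, hTi] at h1
        have h2 := Fin.lt_iff_val_lt_val.mp hkmem.1
        have h3 := Fin.lt_iff_val_lt_val.mp hk'mem.1
        exact Fin.ext (by omega)
      have hTk : T k = T i := hkk' ▸ hk'mem.2
      rcases eq_or_lt_of_le hjk with rfl | hjk
      · exact hTk
      · have hki : (k : ℕ) ≤ n := by
          have := Fin.lt_iff_val_lt_val.mp hkmem.1; omega
        have := ih k j hki hjk (hPT.trans hkmem.2.symm)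
        exact this.trans hTk
  exact fun i j hj hPT => H (i : ℕ) i j le_rfl hj hPT

lemma prev_key {Γ : Type*} [DecidableEq Γ] {m : ℕ} (P T : Fin m → Γ)
    (h : ∀ i, prevVal P i = prevVal T i) :
    ∀ i j : Fin m, P i = P j ↔ T i = T j := by
  have h' : ∀ i, prevVal T i = prevVal P i := fun i => (h i).symm
  intro i j
  rcases lt_trichotomy i j with hij | rfl | hij
  · exact ⟨fun hp => prev_aux P T h j i hij hp,
      fun ht => prev_aux T P h' j i hij ht⟩
  · simp
  · exact ⟨fun hp => (prev_aux P T h i j hij hp.symm).symm,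
      fun ht => (prev_aux T P h' i j hij ht.symm).symm⟩

/-- Two equal-length strings parameterized match iff their prev transformations are
equal. -/
theorem paramMatch_iff_prev_eq {Γ : Type*} [Fintype Γ] [DecidableEq Γ]
    {m : ℕ} (P T : Fin m → Γ) :
    (∃ π : Γ ≃ Γ, ∀ i, T i = π (P i)) ↔ ∀ i, prevVal P i = prevVal T i := by
  constructor
  · rintro ⟨π, hπ⟩ i
    have hset : (Finset.univ.filter fun j => j < i ∧ P j = P i)
        = (Finset.univ.filter fun j => j < i ∧ T j = T i) := by
      ext j
      simp [hπ, EmbeddingLike.apply_eq_iff_eq]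
    simp only [prevVal, hset]
  · intro h
    classical
    have key := prev_key P T h
    have e0 : ∀ a : Set.range P, ∃ i : Fin m, P i = (a : Γ) := fun a => a.2
    let f : Set.range P → Set.range T := fun a => ⟨T (e0 a).choose, Set.mem_range_self _⟩
    have hf : ∀ a : Set.range P, P ((e0 a).choose) = (a : Γ) := fun a => (e0 a).choose_spec
    have hbij : Function.Bijective f := by
      constructor
      · intro a b hab
        have : T ((e0 a).choose) = T ((e0 b).choose) := congrArg Subtype.val hab
        have := (key _ _).mpr this
        rw [hf a, hf b] at this
        exact Subtype.ext this
      · rintro ⟨b, i, rfl⟩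
        refine ⟨⟨P i, Set.mem_range_self i⟩, ?_⟩
        have : P ((e0 ⟨P i, Set.mem_range_self i⟩).choose) = P i :=
          hf ⟨P i, Set.mem_range_self i⟩
        exact Subtype.ext ((key _ _).mp this)
    let e : Set.range P ≃ Set.range T := Equiv.ofBijective f hbij
    have hcard : Fintype.card ((Set.range P)ᶜ : Set Γ)
        = Fintype.card ((Set.range T)ᶜ : Set Γ) := by
      have h1 : Fintype.card (Set.range P) = Fintype.card (Set.range T) :=
        Fintype.card_congr e
      rw [Fintype.card_compl_set, Fintype.card_compl_set, h1]
    let ec : ((Set.range P)ᶜ : Set Γ) ≃ ((Set.range T)ᶜ : Set Γ) :=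
      Fintype.equivOfCardEq hcard
    refine ⟨(Equiv.Set.sumCompl (Set.range P)).symm.trans
      ((e.sumCongr ec).trans (Equiv.Set.sumCompl (Set.range T))), fun i => ?_⟩
    have hmem : P i ∈ Set.range P := Set.mem_range_self i
    have h1 : (Equiv.Set.sumCompl (Set.range P)).symm (P i) = Sum.inl ⟨P i, hmem⟩ :=
      Equiv.Set.sumCompl_symm_apply_of_mem hmem
    simp only [Equiv.trans_apply, h1, Equiv.sumCongr_apply, Sum.map_inl,
      Equiv.Set.sumCompl_apply_inl]
    have : P ((e0 ⟨P i, hmem⟩).choose) = P i := hf ⟨P i, hmem⟩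
    exact ((key _ _).mp this).symm
end

section
/- Let p be a prime, U ≥ 1, and let S₁, S₂ be two distinct multisets of natural numbers all of whose elements are less than U, such that for every value v the multiplicity of v in S₁ and the multiplicity of v in S₂ are each less than p. Then the number of r ∈ ZMod p such that h^set_{p,r}(S₁) = h^set_{p,r}(S₂) is at most U − 1. -/
/-- The Karp-Rabin multiset hash of a multiset of natural numbers: `Σ_{x ∈ S} r^x`,
summed with multiplicity, in `ZMod p`. -/
def msetHash {p : ℕ} (r : ZMod p) (S : Multiset ℕ) : ZMod p :=
  (S.map fun x => r ^ x).sum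

lemma msetHash_eq_sum {p U : ℕ} (r : ZMod p) (S : Multiset ℕ) (hS : ∀ x ∈ S, x < U) :
    msetHash r S = ∑ v ∈ Finset.range U, (S.count v : ZMod p) * r ^ v := by
  rw [msetHash, Finset.sum_multiset_map_count]
  rw [Finset.sum_subset (fun v hv => Finset.mem_range.mpr (hS v (Multiset.mem_toFinset.mp hv)))]
  · simp [nsmul_eq_mul]
  · intro v _ hv
    simp [Multiset.count_eq_zero_of_notMem (fun h => hv (Multiset.mem_toFinset.mpr h))]

/-- Karp-Rabin multiset hash collision bound: for two distinct multisets with values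
below `U` (`U ≥ 1`) and all multiplicities below the prime `p`, the number of
`r ∈ ZMod p` on which their multiset hashes collide is at most `U - 1`. -/
theorem msetHash_collision_card_le {p U : ℕ} (hp : p.Prime) (hU : 1 ≤ U)
    (S₁ S₂ : Multiset ℕ) (h₁ : ∀ x ∈ S₁, x < U) (h₂ : ∀ x ∈ S₂, x < U)
    (hc₁ : ∀ v, S₁.count v < p) (hc₂ : ∀ v, S₂.count v < p) (hne : S₁ ≠ S₂) :
    {r : ZMod p | msetHash r S₁ = msetHash r S₂}.ncard ≤ U - 1 := by
  haveI : Fact p.Prime := ⟨hp⟩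
  set P : Polynomial (ZMod p) :=
    ∑ v ∈ Finset.range U, Polynomial.C ((S₁.count v : ZMod p) - S₂.count v) * Polynomial.X ^ v
    with hP
  have heval : ∀ r : ZMod p, P.eval r = msetHash r S₁ - msetHash r S₂ := by
    intro r
    rw [msetHash_eq_sum r S₁ h₁, msetHash_eq_sum r S₂ h₂, hP]
    simp [Polynomial.eval_finset_sum, Finset.sum_sub_distrib, sub_mul]
  -- P ≠ 0
  obtain ⟨v, hv⟩ : ∃ v, S₁.count v ≠ S₂.count v := by
    by_contra h
    push_neg at h
    exact hne (Multiset.ext.mpr h)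
  have hcoeff : P.coeff v ≠ 0 := by
    have hvU : v < U := by
      by_contra hvU
      push_neg at hvU
      have e1 : S₁.count v = 0 :=
        Multiset.count_eq_zero_of_notMem (fun h => absurd (h₁ v h) (not_lt.mpr hvU))
      have e2 : S₂.count v = 0 :=
        Multiset.count_eq_zero_of_notMem (fun h => absurd (h₂ v h) (not_lt.mpr hvU))
      exact hv (e1.trans e2.symm)
    have : P.coeff v = (S₁.count v : ZMod p) - S₂.count v := by
      rw [hP, Polynomial.finset_sum_coeff]
      rw [Finset.sum_eq_single v]
      · rw [Polynomial.coeff_C_mul, Polynomial.coeff_X_pow, if_pos rfl, mul_one]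
      · intro b _ hb
        rw [Polynomial.coeff_C_mul, Polynomial.coeff_X_pow, if_neg (fun h => hb h.symm),
          mul_zero]
      · intro h; exact absurd (Finset.mem_range.mpr hvU) h
    rw [this, sub_ne_zero]
    intro hcast
    apply hv
    have := congrArg ZMod.val hcast
    rwa [ZMod.val_natCast_of_lt (hc₁ v), ZMod.val_natCast_of_lt (hc₂ v)] at this
  have hPne : P ≠ 0 := fun h => hcoeff (by simp [h])
  have hdeg : P.natDegree ≤ U - 1 := by
    apply Polynomial.natDegree_sum_le_of_forall_le
    intro i hi
    calc (Polynomial.C ((S₁.count i : ZMod p) - S₂.count i) * Polynomial.X ^ i).natDegree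
        ≤ i := Polynomial.natDegree_C_mul_X_pow_le _ _
      _ ≤ U - 1 := Nat.le_sub_one_of_lt (Finset.mem_range.mp hi)
  have hsub : {r : ZMod p | msetHash r S₁ = msetHash r S₂} ⊆ ↑P.roots.toFinset := by
    intro r hr
    simp only [Multiset.mem_toFinset, Finset.coe_sort_coe, Finset.mem_coe]
    rw [Polynomial.mem_roots hPne, Polynomial.IsRoot, heval r, sub_eq_zero]
    exact hr
  calc {r : ZMod p | msetHash r S₁ = msetHash r S₂}.ncard
      ≤ P.roots.toFinset.card := by
        simpa using Set.ncard_le_ncard hsub (Finset.finite_toSet _)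
    _ ≤ Multiset.card P.roots := Multiset.toFinset_card_le _
    _ ≤ P.natDegree := Polynomial.card_roots' P
    _ ≤ U - 1 := hdeg
end

section
/- Let p be a prime, m ≥ 1, and let F be a family of K pairwise distinct subsets of {0, 1, …, m−1}. Then the number of r ∈ ZMod p for which there exist distinct O₁, O₂ ∈ F with h^set_{p,r}(O₁) = h^set_{p,r}(O₂) is at most K·(K−1)/2 · (m − 1). -/
/-- The Karp-Rabin multiset hash of a finite set of natural numbers:
`Σ_{x ∈ O} r^x` in `ZMod p`. -/
def setHash {p : ℕ} (r : ZMod p) (O : Finset ℕ) : ZMod p :=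
  ∑ x ∈ O, r ^ x

theorem pair_collision_ncard_le {p m : ℕ} (hp : p.Prime) (hm : 1 ≤ m)
    {O₁ O₂ : Finset ℕ} (h1 : O₁ ⊆ Finset.range m) (h2 : O₂ ⊆ Finset.range m)
    (hne : O₁ ≠ O₂) :
    {r : ZMod p | setHash r O₁ = setHash r O₂}.ncard ≤ m - 1 := by
  haveI : Fact p.Prime := ⟨hp⟩
  set q : Polynomial (ZMod p) :=
    (∑ x ∈ O₁, Polynomial.X ^ x) - ∑ x ∈ O₂, Polynomial.X ^ x with hq
  have heval : ∀ r : ZMod p, q.eval r = setHash r O₁ - setHash r O₂ := by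
    intro r
    simp [hq, setHash, Polynomial.eval_finset_sum]
  have hcoeff : ∀ n, q.coeff n =
      (if n ∈ O₁ then (1 : ZMod p) else 0) - (if n ∈ O₂ then 1 else 0) := by
    intro n
    simp [hq, Polynomial.finset_sum_coeff, Polynomial.coeff_X_pow, Finset.sum_ite_eq]
  have hq0 : q ≠ 0 := by
    have : ¬ ∀ n, n ∈ O₁ ↔ n ∈ O₂ := fun h => hne (Finset.ext h)
    push_neg at this
    obtain ⟨n, hn⟩ := this
    have hcn : q.coeff n ≠ 0 := by
      rw [hcoeff n]
      rcases Decidable.em (n ∈ O₁) with h | h <;> rcases Decidable.em (n ∈ O₂) with h' | h' <;>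
        simp_all
    exact fun h0 => hcn (by simp [h0])
  have hdeg : q.natDegree ≤ m - 1 := by
    have key : ∀ O : Finset ℕ, O ⊆ Finset.range m →
        (∑ x ∈ O, (Polynomial.X : Polynomial (ZMod p)) ^ x).natDegree ≤ m - 1 := by
      intro O hO
      refine Polynomial.natDegree_sum_le_of_forall_le _ _ fun x hx => ?_
      rw [Polynomial.natDegree_X_pow]
      have := Finset.mem_range.mp (hO hx)
      omega
    refine le_trans (Polynomial.natDegree_sub_le _ _) (max_le (key _ h1) (key _ h2))
  have hsub : {r : ZMod p | setHash r O₁ = setHash r O₂} ⊆ ↑q.roots.toFinset := by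
    intro r hr
    simp only [Set.mem_setOf_eq] at hr
    simp only [Finset.coe_sort_coe, Multiset.mem_toFinset, Finset.mem_coe]
    rw [Polynomial.mem_roots hq0]
    exact by rw [Polynomial.IsRoot, heval r, hr, sub_self]
  calc {r : ZMod p | setHash r O₁ = setHash r O₂}.ncard
      ≤ (↑q.roots.toFinset : Set (ZMod p)).ncard :=
        Set.ncard_le_ncard hsub (Set.toFinite _)
    _ = q.roots.toFinset.card := Set.ncard_coe_finset _
    _ ≤ Multiset.card q.roots := Multiset.toFinset_card_le _
    _ ≤ q.natDegree := Polynomial.card_roots' q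
    _ ≤ m - 1 := hdeg

/-- Union bound over pairwise collisions: for a family `F` of `K` pairwise distinct
subsets of `{0, …, m-1}` (`m ≥ 1`, `p` prime), the number of `r ∈ ZMod p` for which
some two distinct members of `F` have colliding hashes is at most
`K·(K-1)/2 · (m-1)`. -/
theorem setHash_family_collision_card_le {p m : ℕ} (hp : p.Prime) (hm : 1 ≤ m)
    (F : Finset (Finset ℕ)) (hF : ∀ O ∈ F, O ⊆ Finset.range m) :
    {r : ZMod p | ∃ O₁ ∈ F, ∃ O₂ ∈ F, O₁ ≠ O₂ ∧ setHash r O₁ = setHash r O₂}.ncard ≤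
      F.card * (F.card - 1) / 2 * (m - 1) := by
  haveI : Fact p.Prime := ⟨hp⟩
  classical
  set g : Finset (Finset ℕ) → Finset (ZMod p) := fun s =>
    Finset.univ.filter
      (fun r => ∃ O₁ ∈ s, ∃ O₂ ∈ s, O₁ ≠ O₂ ∧ setHash r O₁ = setHash r O₂) with hg
  have hgcard : ∀ s ∈ F.powersetCard 2, (g s).card ≤ m - 1 := by
    intro s hs
    rw [Finset.mem_powersetCard] at hs
    obtain ⟨a, b, hab, rfl⟩ := Finset.card_eq_two.mp hs.2
    have haF : a ∈ F := hs.1 (by simp)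
    have hbF : b ∈ F := hs.1 (by simp)
    have hsub : ((g {a, b}) : Set (ZMod p)) ⊆ {r : ZMod p | setHash r a = setHash r b} := by
      intro r hr
      simp only [hg, Finset.coe_filter, Finset.mem_univ, true_and, Set.mem_setOf_eq] at hr ⊢
      obtain ⟨O₁, h1, O₂, h2, hne, hcol⟩ := hr
      have h1' : O₁ = a ∨ O₁ = b := by simpa using h1
      have h2' : O₂ = a ∨ O₂ = b := by simpa using h2
      rcases h1' with rfl | rfl <;> rcases h2' with rfl | rfl <;>
        first
          | exact hcol
          | exact hcol.symm
          | exact absurd rfl hne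
    have := le_trans (Set.ncard_le_ncard hsub (Set.toFinite _))
      (pair_collision_ncard_le hp hm (hF _ haF) (hF _ hbF) hab)
    rwa [Set.ncard_coe_finset] at this
  have hsub : {r : ZMod p | ∃ O₁ ∈ F, ∃ O₂ ∈ F, O₁ ≠ O₂ ∧ setHash r O₁ = setHash r O₂}
      ⊆ ↑((F.powersetCard 2).biUnion g) := by
    intro r hr
    obtain ⟨O₁, h1, O₂, h2, hne, hcol⟩ := hr
    have hs : ({O₁, O₂} : Finset (Finset ℕ)) ∈ F.powersetCard 2 := by
      rw [Finset.mem_powersetCard]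
      refine ⟨?_, Finset.card_eq_two.mpr ⟨O₁, O₂, hne, rfl⟩⟩
      intro x hx
      rcases Finset.mem_insert.mp hx with rfl | hx
      · exact h1
      · rw [Finset.mem_singleton.mp hx]; exact h2
    simp only [Finset.coe_biUnion, Set.mem_iUnion, Finset.mem_coe]
    refine ⟨{O₁, O₂}, hs, ?_⟩
    simp only [hg, Finset.mem_filter, Finset.mem_univ, true_and]
    exact ⟨O₁, by simp, O₂, by simp, hne, hcol⟩
  calc {r : ZMod p | ∃ O₁ ∈ F, ∃ O₂ ∈ F, O₁ ≠ O₂ ∧ setHash r O₁ = setHash r O₂}.ncard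
      ≤ (↑((F.powersetCard 2).biUnion g) : Set (ZMod p)).ncard :=
        Set.ncard_le_ncard hsub (Set.toFinite _)
    _ = ((F.powersetCard 2).biUnion g).card := Set.ncard_coe_finset _
    _ ≤ ∑ s ∈ F.powersetCard 2, (g s).card := Finset.card_biUnion_le
    _ ≤ (F.powersetCard 2).card * (m - 1) := Finset.sum_le_card_nsmul _ _ _ hgcard
    _ = F.card.choose 2 * (m - 1) := by rw [Finset.card_powersetCard]
    _ = F.card * (F.card - 1) / 2 * (m - 1) := by rw [Nat.choose_two_right]
end

section
/- Let p be a prime and r ∈ ZMod p with r ≠ 0. Let O be a finite set of natural numbers with 0 ∈ O and O ≠ {0}, and let δ be the minimum of the nonzero elements of O. Then the multiset hash of the shifted set O′ = {x − δ : x ∈ O, x ≠ 0} satisfies h^set_{p,r}(O′) = (h^set_{p,r}(O) − 1) · (r⁻¹)^δ in ZMod p. -/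
/-- O(1) update of the Layer 1 structural hash when the first occurrence leaves the
window: if `0 ∈ O`, `O ≠ {0}`, and `δ` is the minimum nonzero element of `O`, then
the hash of the shifted set `O' = {x - δ : x ∈ O, x ≠ 0}` satisfies
`h(O') = (h(O) - 1) · (r⁻¹)^δ`. -/
theorem setHash_shift_update {p : ℕ} (hp : p.Prime) (r : ZMod p) (hr : r ≠ 0)
    (O : Finset ℕ) (h0 : (0 : ℕ) ∈ O) (hO : O ≠ {0}) (δ : ℕ)
    (hδO : δ ∈ O) (hδ0 : δ ≠ 0) (hmin : ∀ x ∈ O, x ≠ 0 → δ ≤ x) :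
    ∑ x ∈ (O.filter fun x => x ≠ 0).image (fun x => x - δ), r ^ x =
      ((∑ x ∈ O, r ^ x) - 1) * r⁻¹ ^ δ := by
  haveI : Fact p.Prime := ⟨hp⟩
  rw [Finset.sum_image]
  · have hfield : ∀ x ∈ O.filter (fun x => x ≠ 0), r ^ (x - δ) = r ^ x * r⁻¹ ^ δ := by
      intro x hx
      simp only [Finset.mem_filter] at hx
      have hle : δ ≤ x := hmin x hx.1 hx.2
      have : r ^ (x - δ) * r ^ δ = r ^ x := by
        rw [← pow_add, Nat.sub_add_cancel hle]
      field_simp [pow_ne_zero, hr]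
      rw [← this, one_div, inv_pow, mul_assoc, mul_inv_cancel₀ (pow_ne_zero _ hr), mul_one]
    rw [Finset.sum_congr rfl hfield, ← Finset.sum_mul]
    congr 1
    have : ∑ x ∈ O.filter (fun x => x ≠ 0), r ^ x
        = (∑ x ∈ O, r ^ x) - ∑ x ∈ O.filter (fun x => ¬ x ≠ 0), r ^ x := by
      rw [eq_sub_iff_add_eq, Finset.sum_filter_add_sum_filter_not]
    rw [this]
    congr 1
    have : O.filter (fun x => ¬ x ≠ 0) = {0} := by
      ext x
      simp only [Finset.mem_filter, not_not, Finset.mem_singleton]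
      constructor
      · exact fun h => h.2
      · rintro rfl; exact ⟨h0, rfl⟩
    rw [this, Finset.sum_singleton, pow_zero]
  · intro a ha b hb hab
    simp only [Finset.mem_coe, Finset.mem_filter] at ha hb
    have := hmin a ha.1 ha.2
    have := hmin b hb.1 hb.2
    simp only at hab
    omega
end

section
/- Let Σ be a finite alphabet and let S₁, S₂ be set-strings of equal length m over Σ that set-parameterized match. Then for every prime p₁ and every r₁ ∈ ZMod p₁, and for every position i, the multiset of Layer 1 fingerprints Φ₁(S₁[i]) = {h^set_{p₁,r₁}(OffSet_{S₁}(σ)) : σ ∈ S₁ i} equals the multiset Φ₁(S₂[i]) = {h^set_{p₁,r₁}(OffSet_{S₂}(σ)) : σ ∈ S₂ i}; consequently, for every prime p₂ and every r₂ ∈ ZMod p₂, the Layer 2 mashed values agree at every position: h^set_{p₂,r₂}(Φ₁(S₁[i])) = h^set_{p₂,r₂}(Φ₁(S₂[i])). -/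
/-- The multiset of Layer 1 fingerprints at position `i`: one Layer 1 hash of the
offset set of `σ` for each character `σ ∈ S i`. -/
def Phi1 {Γ : Type*} [Fintype Γ] [DecidableEq Γ] {m p₁ : ℕ} (r₁ : ZMod p₁)
    (S : Fin m → Finset Γ) (i : Fin m) : Multiset (ZMod p₁) :=
  (S i).val.map fun σ => setHash r₁ (OffSet S σ)

/-- The Layer 2 hash of a multiset of Layer 1 fingerprints: `Σ_{f ∈ F} r₂^(f.val)`
with multiplicity, in `ZMod p₂`. -/
def mashHash {p₁ p₂ : ℕ} (r₂ : ZMod p₂) (F : Multiset (ZMod p₁)) : ZMod p₂ :=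
  (F.map fun f => r₂ ^ f.val).sum

/-- If two set-strings set-parameterized match, then at every position their multisets
of Layer 1 fingerprints are equal, and consequently their Layer 2 mashed values are
equal, for any choice of primes and hash parameters. -/
theorem layers_eq_of_match {Γ : Type*} [Fintype Γ] [DecidableEq Γ] {m : ℕ}
    (S₁ S₂ : Fin m → Finset Γ)
    (hmatch : ∃ π : Γ ≃ Γ, ∀ i, (S₁ i).image π = S₂ i)
    (p₁ : ℕ) (hp₁ : p₁.Prime) (r₁ : ZMod p₁) (i : Fin m) :
    Phi1 r₁ S₁ i = Phi1 r₁ S₂ i ∧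
      ∀ (p₂ : ℕ), p₂.Prime → ∀ r₂ : ZMod p₂,
        mashHash r₂ (Phi1 r₁ S₁ i) = mashHash r₂ (Phi1 r₁ S₂ i) := by
  obtain ⟨π, hπ⟩ := hmatch
  have hOcc : ∀ σ, Occ S₂ (π σ) = Occ S₁ σ := by
    intro σ
    ext j
    simp only [Occ, Finset.mem_filter, Finset.mem_univ, true_and, ← hπ j]
    constructor
    · intro h
      obtain ⟨τ, hτ, he⟩ := Finset.mem_image.mp h
      rwa [π.injective he] at hτ
    · intro h
      exact Finset.mem_image_of_mem _ h
  have hOff : ∀ σ, OffSet S₂ (π σ) = OffSet S₁ σ := by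
    intro σ
    simp [OffSet, hOcc σ]
  have key : Phi1 r₁ S₁ i = Phi1 r₁ S₂ i := by
    unfold Phi1
    rw [← hπ i, Finset.image_val, Multiset.dedup_eq_self.mpr
      ((S₁ i).nodup.map π.injective), Multiset.map_map]
    exact Multiset.map_congr rfl fun σ _ => by simp [hOff σ]
  exact ⟨key, fun p₂ _ r₂ => by rw [key]⟩
end

section
/- There exist a finite alphabet Σ, a length m, and set-strings S₁, S₂ of length m over Σ such that at every position i the naive prev-set encodings coincide, {prev_{S₁}(σ, i) : σ ∈ S₁ i} = {prev_{S₂}(σ, i) : σ ∈ S₂ i} as sets of natural numbers, yet S₁ and S₂ do not set-parameterized match. -/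
/-- The naive prev value of character `σ` at position `i` of a set-string `S`:
`0` if `σ` does not occur before `i`, otherwise `i - j` where `j` is the largest
index `j < i` with `σ ∈ S j`. -/
def prevSetVal {Γ : Type*} [DecidableEq Γ] {m : ℕ} (S : Fin m → Finset Γ)
    (σ : Γ) (i : Fin m) : ℕ :=
  if h : (Finset.univ.filter fun j => j < i ∧ σ ∈ S j).Nonempty then
    (i : ℕ) - (((Finset.univ.filter fun j => j < i ∧ σ ∈ S j).max' h : Fin m) : ℕ)
  else 0

/-- The naive prev-set encoding is not sound for set-parameterized matching: there are
set-strings over a finite alphabet whose prev-set encodings coincide at every position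
yet which do not set-parameterized match. -/
theorem naive_prevSet_not_sound :
    ∃ (K m : ℕ) (S₁ S₂ : Fin m → Finset (Fin K)),
      (∀ i, (S₁ i).image (fun σ => prevSetVal S₁ σ i) =
        (S₂ i).image (fun σ => prevSetVal S₂ σ i)) ∧
      ¬∃ π : Fin K ≃ Fin K, ∀ i, (S₁ i).image π = S₂ i := by
  refine ⟨2, 2, ![{0,1},{0,1}], ![{0,1},{0}], ?_, ?_⟩ <;> decide
end
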